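/- For every integer k ≥ 1 and every integer m, Σ_{i = max(1−2k, 1−2k+m)}^{min(0, m)} χ(−i/(2k−1)) · χ((m−i)/(2k−1)) = 2k · ξ(m/(2k)), where an empty sum is 0. -/

import Mathlib

/-!
With `n = 2k - 1`, an integer `j` satisfies `χ(j/n) = -1` exactly when `j < k`, so every summand
is a product of two signs. Writing each sign as `2·[j ≥ k] - 1` turns the sum into a signed count of
the integers of an interval lying below given thresholds, i.e. into a combination of `toNat`s of
linear expressions in `k` and `m`. The scaling identity for `c · ξ(x/c)` makes the right-hand side
piecewise linear in `|m|` as well, and the two sides agree by linear integer arithmetic.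
-/

open Real Finset

/-- `χ(t) = −1` for `t ∈ [0,1/2]` and `χ(t) = 1` for `t ∈ (1/2,1]`. -/
noncomputable def chi (t : ℝ) : ℝ := if t ≤ 1/2 then -1 else 1

/-- `ξ(t) = max(1−3|t|, |t|−1)` for `|t| ≤ 1` and `ξ(t) = 0` for `|t| > 1`. -/
noncomputable def xi (t : ℝ) : ℝ := if |t| ≤ 1 then max (1 - 3*|t|) (|t| - 1) else 0

lemma chi_intCast_div_eq_ite {k : ℤ} (hk : 1 ≤ k) (j : ℤ) :
    chi ((j : ℝ) / ((2 * k - 1 : ℤ) : ℝ)) = if j < k then -1 else 1 := by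
  have hn : (0 : ℝ) < ((2 * k - 1 : ℤ) : ℝ) := by exact_mod_cast (by omega : (0 : ℤ) < 2 * k - 1)
  have key : (j : ℝ) / ((2 * k - 1 : ℤ) : ℝ) ≤ 1 / 2 ↔ j < k := by
    rw [div_le_iff₀ hn, show j < k ↔ 2 * j ≤ 2 * k - 1 by omega, ← Int.cast_le (R := ℝ)]
    push_cast
    constructor <;> intro h <;> linarith
  simp only [chi, key]

lemma mul_xi_div {c : ℝ} (hc : 0 < c) (x : ℝ) :
    c * xi (x / c) = if |x| ≤ c then max (c - 3 * |x|) (|x| - c) else 0 := by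
  simp only [xi, abs_div, abs_of_pos hc, div_le_one hc]
  split_ifs
  · rw [mul_max_of_nonneg _ _ hc.le]
    congr 1 <;> field_simp
  · rw [mul_zero]

lemma sum_Icc_ite_le (a b c : ℤ) :
    ∑ i ∈ Icc a b, (if i ≤ c then (1 : ℤ) else 0) = (min b c + 1 - a).toNat := by
  rw [sum_boole, show {i ∈ Icc a b | i ≤ c} = Icc a (min b c) by ext; simp only [mem_filter, mem_Icc]; omega, Int.card_Icc]

lemma sum_sign_mul_sign {k : ℤ} (hk : 1 ≤ k) (m : ℤ) :
    ∑ i ∈ Icc (max (1 - 2 * k) (1 - 2 * k + m)) (min 0 m),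
        (if -i < k then (-1 : ℤ) else 1) * (if m - i < k then -1 else 1)
      = if |m| ≤ 2 * k then max (2 * k - 3 * |m|) (|m| - 2 * k) else 0 := by
  have expand : ∀ i : ℤ, (if -i < k then (-1 : ℤ) else 1) * (if m - i < k then -1 else 1)
      = 1 - 2 * (if i ≤ -k then 1 else 0) - 2 * (if i ≤ m - k then 1 else 0)
        + 4 * (if i ≤ min (-k) (m - k) then 1 else 0) := by
    intro i; split_ifs <;> omega
  simp only [expand, sum_add_distrib, sum_sub_distrib, ← mul_sum, sum_Icc_ite_le, sum_const,
    Int.card_Icc, nsmul_eq_mul, mul_one]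
  rcases abs_cases m with ⟨hm, _⟩ | ⟨hm, _⟩ <;> rw [hm] <;> split_ifs <;> omega

theorem statement6 (k m : ℤ) (hk : 1 ≤ k) :
    (∑ i ∈ Finset.Icc (max (1 - 2*k) (1 - 2*k + m)) (min 0 m),
        chi ((-i : ℤ) / ((2*k - 1 : ℤ) : ℝ)) * chi (((m - i : ℤ) : ℝ) / ((2*k - 1 : ℤ) : ℝ)))
      = 2 * (k : ℝ) * xi ((m : ℝ) / (2 * (k : ℝ))) := by
  have h2k : (0 : ℝ) < 2 * k := by exact_mod_cast (by omega : (0 : ℤ) < 2 * k)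
  simp only [chi_intCast_div_eq_ite hk, mul_xi_div h2k]
  exact_mod_cast sum_sign_mul_sign hk m
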